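/- arXiv:1208.0571 — 7 statements merged into one kernel-verified Lean document; each statement's English description precedes it below -/
import Mathlib

section
/- Let U and V be finite-dimensional vector spaces over a field K of characteristic zero with dim V = k+1. Let W ⊆ Hom(U,V) be a linear subspace satisfying property P_k: for every k+1 linearly independent vectors u₁,…,u_{k+1} ∈ U and every choice of vectors v₁,…,v_{k+1} ∈ V there exists f ∈ W with f(u_j) = v_j for all j. Then W = Hom(U,V). -/
open Module

/-- Any linearly independent `Fin`-indexed family can be extended to a longer one. -/
lemma extend_li {K U : Type*} [Field K] [AddCommGroup U] [Module K U]
    [FiniteDimensional K U] (n : ℕ) :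
    ∀ (d : ℕ), n + d ≤ finrank K U → ∀ (u : Fin n → U), LinearIndependent K u →
    ∃ u' : Fin (n + d) → U, LinearIndependent K u' ∧
      ∀ j : Fin n, u' (Fin.castLE (Nat.le_add_right n d) j) = u j := by
  intro d
  induction d with
  | zero =>
      intro _ u hu
      exact ⟨u, hu, fun j => rfl⟩
  | succ d ih =>
      intro h u hu
      obtain ⟨u', hu', hext⟩ := ih (by omega) u hu
      obtain ⟨x, hx⟩ := exists_linearIndependent_snoc_of_lt_finrank hu' (by omega)
      refine ⟨Fin.snoc u' x, hx, fun j => ?_⟩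
      have h1 : (Fin.castLE (Nat.le_add_right n (d + 1)) j)
          = Fin.castSucc (Fin.castLE (Nat.le_add_right n d) j) := rfl
      rw [h1, Fin.snoc_castSucc, hext]

/-- If `W ⊆ Hom(U,V)` satisfies property `P_k` and `dim V = k+1`,
then `W = Hom(U,V)`. -/
theorem stmt0 {K U V : Type*} [Field K] [CharZero K]
    [AddCommGroup U] [Module K U] [AddCommGroup V] [Module K V]
    [FiniteDimensional K U] [FiniteDimensional K V] (k : ℕ)
    (hU : k < finrank K U) (hV : finrank K V = k + 1)
    (W : Submodule K (U →ₗ[K] V))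
    (hW : ∀ u : Fin (k + 1) → U, LinearIndependent K u →
      ∀ v : Fin (k + 1) → V, ∃ f ∈ W, ∀ j, f (u j) = v j) :
    W = ⊤ := by
  by_contra hne
  obtain ⟨φ, hφ0, hφmap⟩ :=
    Submodule.exists_dual_map_eq_bot_of_lt_top (p := W) (lt_top_iff_ne_top.mpr hne) inferInstance
  have hφW : ∀ f ∈ W, φ f = 0 := by
    intro f hf
    have h1 : φ f ∈ W.map φ := Submodule.mem_map_of_mem hf
    rw [hφmap] at h1
    simpa using h1
  set r := finrank K U with hr
  let bU : Basis (Fin r) K U := finBasis K U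
  let ψ : Fin r → Module.Dual K V := fun i => φ ∘ₗ (LinearMap.smulRightₗ (bU.coord i))
  have hA : ∀ f : U →ₗ[K] V, φ f = ∑ i, ψ i (f (bU i)) := by
    intro f
    have hf : f = ∑ i, (LinearMap.smulRightₗ (bU.coord i)) (f (bU i)) := by
      refine bU.ext fun j => ?_
      simp [LinearMap.sum_apply, Basis.coord_apply, Basis.repr_self,
        Finsupp.single_apply]
    conv_lhs => rw [hf]
    rw [map_sum]
    rfl
  let T : V →ₗ[K] U := ∑ i, (ψ i).smulRight (bU i)
  have hT : ∀ v, T v = ∑ i, ψ i v • bU i := by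
    intro v
    simp [T, LinearMap.sum_apply]
  have hψT : ∀ i v, ψ i v = bU.coord i (T v) := by
    intro i v
    rw [hT]
    simp [Basis.coord_apply, map_sum, map_smul, Basis.repr_self, Finsupp.single_apply]
  by_cases hT0 : T = 0
  · have hψ0 : ∀ i, ψ i = 0 := by
      intro i
      ext v
      have := hψT i v
      rw [hT0] at this
      simpa using this
    exact hφ0 (by ext f; rw [hA f]; simp [hψ0])
  · set m := finrank K (LinearMap.range T) with hmdef
    have hm : m ≤ k + 1 := by
      have h1 : m ≤ finrank K V := LinearMap.finrank_range_le T
      omega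
    let e : Basis (Fin m) K (LinearMap.range T) := finBasis K _
    let χ : Fin m → Module.Dual K V := fun a => (e.coord a) ∘ₗ T.rangeRestrict
    have hTχ : ∀ v, T v = ∑ a, χ a v • ((e a : U)) := by
      intro v
      have h1 := e.sum_repr (T.rangeRestrict v)
      calc T v = ((T.rangeRestrict v : LinearMap.range T) : U) := rfl
        _ = ((∑ a, e.repr (T.rangeRestrict v) a • e a : LinearMap.range T) : U) := by rw [h1]
        _ = ∑ a, χ a v • ((e a : U)) := by
            push_cast
            rfl
    obtain ⟨a₀, ha₀⟩ : ∃ a₀, χ a₀ ≠ 0 := by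
      by_contra hc
      push_neg at hc
      apply hT0
      ext v
      rw [LinearMap.zero_apply, hTχ v]
      simp [hc]
    obtain ⟨x₀, hx₀⟩ : ∃ x₀, χ a₀ x₀ ≠ 0 := by
      by_contra hc
      push_neg at hc
      exact ha₀ (LinearMap.ext hc)
    have hei : LinearIndependent K (fun a : Fin m => ((e a : U))) :=
      e.linearIndependent.map' (LinearMap.range T).subtype (Submodule.ker_subtype _)
    obtain ⟨u0, hu0, hue0⟩ := extend_li m (k + 1 - m) (by omega) _ hei
    have hq : m + (k + 1 - m) = k + 1 := by omega
    let uu : Fin (k + 1) → U := u0 ∘ (finCongr hq.symm)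
    have huu : LinearIndependent K uu := hu0.comp _ (finCongr hq.symm).injective
    have hue : ∀ a : Fin m, uu (Fin.castLE hm a) = ((e a : U)) := by
      intro a
      have h1 : (finCongr hq.symm) (Fin.castLE hm a)
          = Fin.castLE (Nat.le_add_right m (k + 1 - m)) a := rfl
      show u0 ((finCongr hq.symm) (Fin.castLE hm a)) = _
      rw [h1, hue0]
    let vv : Fin (k + 1) → V := fun j => if j = Fin.castLE hm a₀ then x₀ else 0
    obtain ⟨f, hfW, hfv⟩ := hW uu huu vv
    have key : φ f = ∑ a, χ a (f ((e a : U))) := by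
      rw [hA]
      have h1 : ∀ i, ψ i (f (bU i)) = ∑ a, bU.coord i ((e a : U)) * χ a (f (bU i)) := by
        intro i
        rw [hψT, hTχ]
        rw [map_sum]
        refine Finset.sum_congr rfl fun a _ => ?_
        rw [map_smul, smul_eq_mul, mul_comm]
      have h2 : ∀ a, χ a (f ((e a : U))) = ∑ i, bU.coord i ((e a : U)) * χ a (f (bU i)) := by
        intro a
        conv_lhs => rw [← bU.sum_repr ((e a : U))]
        rw [map_sum, map_sum]
        refine Finset.sum_congr rfl fun i _ => ?_
        rw [map_smul, map_smul, smul_eq_mul, Basis.coord_apply]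
      rw [Finset.sum_congr rfl fun i _ => h1 i, Finset.sum_comm]
      exact Finset.sum_congr rfl fun a _ => (h2 a).symm
    have hsum : φ f = χ a₀ x₀ := by
      rw [key]
      have h3 : ∀ a : Fin m, χ a (f ((e a : U))) = if a = a₀ then χ a₀ x₀ else 0 := by
        intro a
        rw [← hue a, hfv]
        by_cases haa : a = a₀
        · subst haa
          simp [vv]
        · have hne' : Fin.castLE hm a ≠ Fin.castLE hm a₀ := by
            intro hcc
            exact haa (Fin.castLE_injective hm hcc)
          simp [vv, hne', haa]
      rw [Finset.sum_congr rfl fun a _ => h3 a]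
      simp
    rw [hφW f hfW] at hsum
    exact hx₀ hsum.symm
end

section
/- Let U, V be finite-dimensional vector spaces over K and let W ⊆ Hom(U,V) satisfy property P_k. Then under the canonical identification of Hom(U,V) with Hom(V*,U*) (by taking duals/transposes), W also satisfies the dual property: for every k+1 linearly independent functionals φ₁,…,φ_{k+1} ∈ V* and every ψ₁,…,ψ_{k+1} ∈ U*, there exists f ∈ W whose transpose f* : V* → U* satisfies f*(φ_j) = ψ_j for all j. -/
open Module

/-- Any linearly independent family of size `m ≤ n ≤ finrank` extends to a linearly
independent family of size `n`. -/
theorem ext_li {K U : Type*} [Field K] [AddCommGroup U] [Module K U]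
    (n : ℕ) (hn : n ≤ finrank K U) :
    ∀ m, m ≤ n → ∀ t : Fin m → U, LinearIndependent K t →
      ∃ t' : Fin n → U, LinearIndependent K t' ∧ Set.range t ⊆ Set.range t' := by
  induction n with
  | zero => intro m hm t ht
            interval_cases m
            exact ⟨t, ht, subset_rfl⟩
  | succ p ih =>
      intro m hm t ht
      rcases Nat.eq_or_lt_of_le hm with h | h
      · subst h; exact ⟨t, ht, subset_rfl⟩
      · obtain ⟨t', ht', hr⟩ := ih (Nat.le_of_succ_le hn) m (Nat.lt_succ_iff.mp h) t ht
        obtain ⟨x, hx⟩ := exists_linearIndependent_cons_of_lt_finrank ht' hn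
        refine ⟨Fin.cons x t', hx, hr.trans ?_⟩
        rw [Fin.range_cons]
        exact Set.subset_insert _ _

/-- Key lemma: if `W` satisfies `P_k`, `φ` is linearly independent and the `u j` are not
all zero, then some `f ∈ W` has `∑ j, φ j (f (u j)) ≠ 0`. -/
theorem key_lemma {K U V : Type*} [Field K]
    [AddCommGroup U] [Module K U] [AddCommGroup V] [Module K V] (k : ℕ)
    (hU : k + 1 ≤ finrank K U)
    (W : Submodule K (U →ₗ[K] V))
    (hW : ∀ u : Fin (k + 1) → U, LinearIndependent K u →
      ∀ v : Fin (k + 1) → V, ∃ f ∈ W, ∀ j, f (u j) = v j)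
    (φ : Fin (k + 1) → Module.Dual K V) (hφ : LinearIndependent K φ)
    (u : Fin (k + 1) → U) (i₀ : Fin (k + 1)) (hu : u i₀ ≠ 0) :
    ∃ f ∈ W, ∑ j, φ j (f (u j)) ≠ 0 := by
  classical
  -- a maximal linearly independent subfamily of u, as a set
  obtain ⟨b, hbsub, hbspan, hbli⟩ := exists_linearIndependent K (Set.range u)
  have hbfin : b.Finite := (Set.finite_range u).subset hbsub
  haveI : Fintype b := hbfin.fintype
  set m := Fintype.card b with hm
  have hmle : m ≤ k + 1 := by
    have h1 : Fintype.card b ≤ Fintype.card (Set.range u) :=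
      Set.card_le_card hbsub
    have h2 : Fintype.card (Set.range u) ≤ Fintype.card (Fin (k + 1)) :=
      Fintype.card_range_le u
    exact (h1.trans h2).trans (by simp)
  let e := (Fintype.equivFin b).symm
  let t : Fin m → U := fun i => (e i : U)
  have htli : LinearIndependent K t := hbli.comp e e.injective
  have htr : Set.range t = b := by
    ext x
    constructor
    · rintro ⟨i, rfl⟩; exact (e i).2
    · intro hx; exact ⟨e.symm ⟨x, hx⟩, by simp [t]⟩
  obtain ⟨t', ht', hsub⟩ := ext_li (k + 1) hU m hmle t htli
  have hspan : ∀ j, u j ∈ Submodule.span K (Set.range t') := by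
    intro j
    apply Submodule.span_mono (htr ▸ hsub)
    rw [hbspan]
    exact Submodule.subset_span ⟨j, rfl⟩
  choose a ha using fun j => (Submodule.mem_span_range_iff_exists_fun K).mp (hspan j)
  -- χ l = ∑ j, a j l • φ j
  set χ : Fin (k + 1) → Module.Dual K V := fun l => ∑ j, a j l • φ j with hχ
  have hχne : ∃ l, χ l ≠ 0 := by
    by_contra hc
    push_neg at hc
    have haz : ∀ j l, a j l = 0 := by
      intro j l
      exact Fintype.linearIndependent_iff.mp hφ (fun j => a j l) (hc l) j
    apply hu
    rw [← ha i₀]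
    simp [haz]
  obtain ⟨l₀, hl₀⟩ := hχne
  obtain ⟨v, hv⟩ : ∃ v, χ l₀ v ≠ 0 := by
    by_contra hc
    push_neg at hc
    exact hl₀ (LinearMap.ext hc)
  obtain ⟨f, hfW, hf⟩ := hW t' ht' (Pi.single l₀ v)
  refine ⟨f, hfW, ?_⟩
  have hfu : ∀ j, f (u j) = a j l₀ • v := by
    intro j
    rw [← ha j]
    simp only [map_sum, map_smul, hf]
    rw [Finset.sum_eq_single l₀]
    · simp
    · intro l _ hl; simp [Pi.single_eq_of_ne hl]
    · simp
  simp only [hfu, map_smul]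
  have : ∑ j, a j l₀ • φ j v = χ l₀ v := by
    rw [hχ]
    simp [LinearMap.sum_apply]
  rw [this]
  exact hv

/-- If `W ⊆ Hom(U,V)` satisfies property `P_k`, then it satisfies the dual
property: for all linearly independent `φ₁,…,φ_{k+1} ∈ V*` and all `ψ₁,…,ψ_{k+1} ∈ U*`
there is `f ∈ W` with transpose `f*` sending `φ_j` to `ψ_j`. -/
theorem stmt1 {K U V : Type*} [Field K]
    [AddCommGroup U] [Module K U] [AddCommGroup V] [Module K V]
    [FiniteDimensional K U] [FiniteDimensional K V] (k : ℕ)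
    (hU : k + 1 ≤ finrank K U) (hV : k + 1 ≤ finrank K V)
    (W : Submodule K (U →ₗ[K] V))
    (hW : ∀ u : Fin (k + 1) → U, LinearIndependent K u →
      ∀ v : Fin (k + 1) → V, ∃ f ∈ W, ∀ j, f (u j) = v j) :
    ∀ φ : Fin (k + 1) → Module.Dual K V, LinearIndependent K φ →
      ∀ ψ : Fin (k + 1) → Module.Dual K U,
        ∃ f ∈ W, ∀ j, LinearMap.dualMap f (φ j) = ψ j := by
  classical
  intro φ hφ ψ
  let E : W →ₗ[K] (Fin (k + 1) → Module.Dual K U) :=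
    LinearMap.pi fun j => (LinearMap.llcomp K U V K (φ j)).comp W.subtype
  suffices hs : Function.Surjective E by
    obtain ⟨⟨f, hfW⟩, hf⟩ := hs ψ
    refine ⟨f, hfW, fun j => ?_⟩
    have := congrFun hf j
    exact this
  rw [← LinearMap.range_eq_top]
  by_contra hne
  obtain ⟨g, hg0, hgbot⟩ := Submodule.exists_dual_map_eq_bot_of_lt_top
    (lt_top_iff_ne_top.mpr hne) inferInstance
  -- the vectors u j
  let u : Fin (k + 1) → U := fun j =>
    (evalEquiv K U).symm (g.comp (LinearMap.single K (fun _ => Module.Dual K U) j))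
  have hgu : ∀ (j) (ξ : Module.Dual K U), g (Pi.single j ξ) = ξ (u j) := by
    intro j ξ
    have := apply_evalEquiv_symm_apply K U ξ
      (g.comp (LinearMap.single K (fun _ => Module.Dual K U) j))
    simp only [LinearMap.comp_apply, LinearMap.single_apply] at this
    exact this.symm
  have hgsum : ∀ x : Fin (k + 1) → Module.Dual K U, g x = ∑ j, (x j) (u j) := by
    intro x
    have hx : x = ∑ j, Pi.single j (x j) := by
      ext l; simp [Finset.sum_apply, Pi.single_apply]
    rw [hx, map_sum]
    simp_rw [hgu]
    congr 1
    ext j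
    congr 1
    rw [← hx]
  -- g kills E f for f ∈ W
  have hvanish : ∀ f ∈ W, ∑ j, φ j (f (u j)) = 0 := by
    intro f hfW
    have hmem : (fun j => (φ j).comp f) ∈ LinearMap.range E := ⟨⟨f, hfW⟩, rfl⟩
    have : g (fun j => (φ j).comp f) = 0 := by
      have := hgbot.le (Submodule.mem_map_of_mem hmem)
      exact (Submodule.mem_bot K).mp this
    rw [hgsum] at this
    exact this
  -- some u j ≠ 0
  have hune : ∃ i₀, u i₀ ≠ 0 := by
    by_contra hc
    push_neg at hc
    apply hg0
    ext j ξ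
    simp only [LinearMap.comp_apply, LinearMap.single_apply, LinearMap.zero_comp,
      LinearMap.zero_apply]
    rw [hgu, hc j, map_zero]
  obtain ⟨i₀, hi₀⟩ := hune
  obtain ⟨f, hfW, hf⟩ := key_lemma k hU W hW φ hφ u i₀ hi₀
  exact hf (hvanish f hfW)
end

section
/- Let U, V be finite-dimensional K-vector spaces, W ⊆ Hom(U,V) satisfying property P_k, and Q any (k+1)-dimensional quotient of V with projection π : V → Q. Then the composite map W → Hom(U,Q), f ↦ π ∘ f, is surjective. -/
open Module

private lemma extend_indep {K U : Type*} [Field K] [AddCommGroup U] [Module K U]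
    [FiniteDimensional K U] {m n : ℕ} (hmn : m ≤ n) (hn : n ≤ finrank K U)
    (y : Fin m → U) (hy : LinearIndependent K y) :
    ∃ w : Fin n → U, LinearIndependent K w ∧ ∀ l : Fin m, w (Fin.castLE hmn l) = y l := by
  induction n, hmn using Nat.le_induction with
  | base => exact ⟨y, hy, fun l => rfl⟩
  | succ n hmn ih =>
    obtain ⟨w, hw, hwy⟩ := ih (le_trans (Nat.le_succ n) hn)
    have hspan : Submodule.span K (Set.range w) ≠ ⊤ := by
      intro h
      have h1 := finrank_span_eq_card hw
      rw [h] at h1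
      rw [finrank_top] at h1
      simp only [Fintype.card_fin] at h1
      omega
    have hex : ¬ ∀ z : U, z ∈ Submodule.span K (Set.range w) :=
      fun h => hspan (Submodule.eq_top_iff'.2 h)
    push_neg at hex
    obtain ⟨x, hx⟩ := hex
    refine ⟨Fin.snoc w x, linearIndependent_fin_snoc.2 ⟨hw, hx⟩, fun l => ?_⟩
    have he : Fin.castLE (hmn.trans (Nat.le_succ n)) l = Fin.castSucc (Fin.castLE hmn l) := rfl
    rw [he, Fin.snoc_castSucc, hwy]

/-- If `W ⊆ Hom(U,V)` satisfies property `P_k` and `π : V → Q` is a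
surjection onto a `(k+1)`-dimensional quotient, then `W → Hom(U,Q)`, `f ↦ π ∘ f`,
is surjective. -/
theorem stmt4 {K U V Q : Type*} [Field K]
    [AddCommGroup U] [Module K U] [AddCommGroup V] [Module K V]
    [AddCommGroup Q] [Module K Q]
    [FiniteDimensional K U] [FiniteDimensional K V] [FiniteDimensional K Q] (k : ℕ)
    (hU : k + 1 ≤ finrank K U) (hV : k + 1 ≤ finrank K V)
    (W : Submodule K (U →ₗ[K] V))
    (hW : ∀ u : Fin (k + 1) → U, LinearIndependent K u →
      ∀ v : Fin (k + 1) → V, ∃ f ∈ W, ∀ j, f (u j) = v j)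
    (hQ : finrank K Q = k + 1) (π : V →ₗ[K] Q) (hπ : Function.Surjective π) :
    ∀ g : U →ₗ[K] Q, ∃ f ∈ W, π ∘ₗ f = g := by
  classical
  set Φ : (U →ₗ[K] V) →ₗ[K] (U →ₗ[K] Q) := LinearMap.llcomp K U V Q π with hΦ
  suffices hS : Submodule.map Φ W = ⊤ by
    intro g
    have hg : g ∈ Submodule.map Φ W := by rw [hS]; trivial
    obtain ⟨f, hf, hfg⟩ := hg
    exact ⟨f, hf, hfg⟩
  by_contra hne
  obtain ⟨φ, hφ0, hφmap⟩ :=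
    (Submodule.map Φ W).exists_dual_map_eq_bot_of_lt_top (lt_top_iff_ne_top.2 hne) inferInstance
  have hφ : ∀ h ∈ Submodule.map Φ W, φ h = 0 := by
    intro h hh
    have : φ h ∈ Submodule.map φ (Submodule.map Φ W) := Submodule.mem_map_of_mem hh
    rw [hφmap] at this
    exact (Submodule.mem_bot K).1 this
  -- basis of Q
  let c : Basis (Fin (k + 1)) K Q := Module.finBasisOfFinrankEq K Q hQ
  -- the vectors x j representing φ
  let x : Fin (k + 1) → U := fun j =>
    (Module.evalEquiv K U).symm (φ ∘ₗ (LinearMap.smulRightₗ.flip (c j)))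
  have hx : ∀ (j) (ψ : Module.Dual K U), ψ (x j) = φ (ψ.smulRight (c j)) := by
    intro j ψ
    simp only [x]
    simpa [LinearMap.smulRightₗ] using Module.apply_evalEquiv_symm_apply (R := K) (M := U) ψ
      (φ ∘ₗ (LinearMap.smulRightₗ.flip (c j)))
  have hrepr : ∀ h : U →ₗ[K] Q, φ h = ∑ j, c.coord j (h (x j)) := by
    intro h
    have hh : h = ∑ j, ((c.coord j).comp h).smulRight (c j) := by
      ext u
      simp only [LinearMap.coe_sum, Finset.sum_apply, LinearMap.smulRight_apply,
        LinearMap.comp_apply, Module.Basis.coord_apply]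
      exact (c.sum_repr (h u)).symm
    calc φ h = ∑ j, φ (((c.coord j).comp h).smulRight (c j)) := by rw [← map_sum, ← hh]
      _ = ∑ j, c.coord j (h (x j)) := by
          refine Finset.sum_congr rfl fun j _ => ?_
          rw [← hx j ((c.coord j).comp h)]
          rfl
  have hxne : ∃ j, x j ≠ 0 := by
    by_contra hall
    push_neg at hall
    refine hφ0 (LinearMap.ext fun h => ?_)
    rw [hrepr h]
    simp [hall]
  set M : Submodule K U := Submodule.span K (Set.range x) with hM
  set m : ℕ := finrank K M with hm
  have hmle : m ≤ k + 1 := by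
    have h1 := finrank_span_le_card (R := K) (Set.range x)
    rw [Set.toFinset_range] at h1
    have h3 : (Finset.univ.image x).card ≤ (Finset.univ : Finset (Fin (k + 1))).card :=
      Finset.card_image_le
    simp only [Finset.card_univ, Fintype.card_fin] at h3
    rw [hm, hM]
    omega
  let yB : Basis (Fin m) K M := Module.finBasis K M
  let y : Fin m → U := fun l => (yB l : U)
  have hy : LinearIndependent K y := yB.linearIndependent.map' M.subtype M.ker_subtype
  have hxM : ∀ j, x j ∈ M := fun j => Submodule.subset_span (Set.mem_range_self j)
  let A : Fin (k + 1) → Fin m → K := fun j l => yB.repr ⟨x j, hxM j⟩ l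
  have hxA : ∀ j, x j = ∑ l, A j l • y l := by
    intro j
    have h1 := yB.sum_repr ⟨x j, hxM j⟩
    calc x j = ((⟨x j, hxM j⟩ : M) : U) := rfl
      _ = ((∑ l, yB.repr ⟨x j, hxM j⟩ l • yB l : M) : U) := by rw [h1]
      _ = ∑ l, A j l • y l := by rw [Submodule.coe_sum]; rfl
  let η : Fin m → Module.Dual K Q := fun l => ∑ j, A j l • c.coord j
  have hrepr2 : ∀ h : U →ₗ[K] Q, φ h = ∑ l, η l (h (y l)) := by
    intro h
    rw [hrepr h]
    have h1 : ∀ j, c.coord j (h (x j)) = ∑ l, A j l • c.coord j (h (y l)) := by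
      intro j
      rw [hxA j]
      rw [map_sum, map_sum]
      refine Finset.sum_congr rfl fun l _ => ?_
      rw [map_smul, map_smul]
    rw [Finset.sum_congr rfl fun j _ => h1 j, Finset.sum_comm]
    refine Finset.sum_congr rfl fun l _ => ?_
    simp [η]
  obtain ⟨j0, hj0⟩ := hxne
  have hηne : ∃ l, η l ≠ 0 := by
    by_contra hall
    push_neg at hall
    have hA : ∀ l j, A j l = 0 := by
      intro l j
      have hli := c.dualBasis.linearIndependent
      rw [linearIndependent_iff'] at hli
      refine hli Finset.univ (fun j => A j l) ?_ j (Finset.mem_univ j)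
      have := hall l
      simpa [η, Basis.coe_dualBasis] using this
    refine hj0 ?_
    rw [hxA j0]
    simp [hA]
  obtain ⟨l0, hl0⟩ := hηne
  obtain ⟨q0, hq0⟩ : ∃ q0, η l0 q0 ≠ 0 := by
    by_contra hq
    push_neg at hq
    exact hl0 (LinearMap.ext fun q => by simp [hq q])
  set q : Q := (η l0 q0)⁻¹ • q0 with hqdef
  have hηq : η l0 q = 1 := by
    rw [hqdef, map_smul, smul_eq_mul, inv_mul_cancel₀ hq0]
  obtain ⟨vl, hvl⟩ := hπ q
  obtain ⟨w, hwind, hwy⟩ := extend_indep hmle hU y hy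
  let v : Fin (k + 1) → V := fun i => if i = Fin.castLE hmle l0 then vl else 0
  obtain ⟨f, hfW, hfv⟩ := hW w hwind v
  have h0 := hφ (Φ f) (Submodule.mem_map_of_mem hfW)
  rw [hrepr2] at h0
  have hval : ∀ l, η l ((Φ f) (y l)) = if l = l0 then 1 else 0 := by
    intro l
    have h2 : (Φ f) (y l) = π (f (w (Fin.castLE hmle l))) := by
      rw [hwy l]
      rfl
    rw [h2, hfv]
    by_cases hl : l = l0
    · subst hl
      simp [v, hvl, hηq]
    · have hne' : Fin.castLE hmle l ≠ Fin.castLE hmle l0 :=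
        fun hc => hl (Fin.castLE_injective _ hc)
      simp [v, hne', hl]
  rw [Finset.sum_congr rfl fun l _ => hval l] at h0
  simp at h0
end

section
/- Fix a point Λ = ⟨s₀⟩ ⊗ Γ of the generalized Segre variety Seg ⊆ G(k+1, Hom(H*, S*)), the image of P(S*) × G(k+1,H) under (a,Γ) ↦ a ⊗ Γ. Then the vector space T̃ := { ψ ∈ Hom(Λ, Hom(H*, S*)) : for all φ ∈ Λ, (ψ(φ))(ker φ) ⊆ ⟨s₀⟩ } has dimension (k+1)(n+1) + s - 1, where dim S = s and dim H = n+1. -/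
open Module

section helpers
variable {K Sd Hd : Type*} [Field K]
    [AddCommGroup Sd] [Module K Sd] [AddCommGroup Hd] [Module K Hd]

/-- If all maps in `Λ` have range in `span{s₀}` and `ker φ₀ ≤ ker φ`, with `φ₀ ≠ 0`,
then `φ` is a multiple of `φ₀`. -/
lemma lemA (s₀ : Sd) (φ₀ φ : Hd →ₗ[K] Sd)
    (h₀ : ∀ x, φ₀ x ∈ Submodule.span K {s₀}) (h : ∀ x, φ x ∈ Submodule.span K {s₀})
    (x₀ : Hd) (hx₀ : φ₀ x₀ ≠ 0)
    (hk : ∀ z, φ₀ z = 0 → φ z = 0) : ∃ c : K, φ = c • φ₀ := by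
  obtain ⟨a, ha⟩ := Submodule.mem_span_singleton.mp (h₀ x₀)
  have ha0 : a ≠ 0 := by rintro rfl; simp [← ha] at hx₀
  obtain ⟨b, hb⟩ := Submodule.mem_span_singleton.mp (h x₀)
  refine ⟨b * a⁻¹, ?_⟩
  ext y
  obtain ⟨d, hd⟩ := Submodule.mem_span_singleton.mp (h₀ y)
  have hz : φ₀ (y - (d * a⁻¹) • x₀) = 0 := by
    simp [← hd, ← ha, smul_smul, mul_assoc, inv_mul_cancel₀ ha0]
  have hz' := hk _ hz
  have : φ y = (d * a⁻¹) • φ x₀ := by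
    have := hz'
    rw [map_sub, map_smul, sub_eq_zero] at this
    exact this
  rw [LinearMap.smul_apply, this, ← hb, ← hd, smul_smul, smul_smul]
  congr 1
  ring

/-- Propagation: if `ψ φ` lands in `L` on `ker φ` and at one point outside `ker φ`,
it lands in `L` everywhere. -/
lemma prop_lem (s₀ : Sd) (φ : Hd →ₗ[K] Sd) (g : Hd →ₗ[K] Sd)
    (h : ∀ x, φ x ∈ Submodule.span K {s₀})
    (hker : ∀ x, φ x = 0 → g x ∈ Submodule.span K {s₀})
    (z : Hd) (hz : φ z ≠ 0) (hgz : g z ∈ Submodule.span K {s₀}) :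
    ∀ y, g y ∈ Submodule.span K {s₀} := by
  intro y
  obtain ⟨a, ha⟩ := Submodule.mem_span_singleton.mp (h z)
  have ha0 : a ≠ 0 := by rintro rfl; simp [← ha] at hz
  obtain ⟨c, hc⟩ := Submodule.mem_span_singleton.mp (h y)
  have hy : φ (y - (c * a⁻¹) • z) = 0 := by
    simp [← hc, ← ha, smul_smul, mul_assoc, inv_mul_cancel₀ ha0]
  have : g y = g (y - (c * a⁻¹) • z) + (c * a⁻¹) • g z := by
    rw [map_sub, map_smul]; abel
  rw [this]
  exact Submodule.add_mem _ (hker _ hy) (Submodule.smul_mem _ _ hgz)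

/-- Key lemma: if `ψ ∈ T̃` and `ψ φ₀ x₀ ∈ ⟨s₀⟩` with `φ₀ x₀ ≠ 0`, then all values
of `ψ` lie in `⟨s₀⟩`. -/
lemma key_lem (s₀ : Sd) (hs₀ : s₀ ≠ 0) (Λ : Submodule K (Hd →ₗ[K] Sd))
    (hrange : ∀ f ∈ Λ, LinearMap.range f ≤ Submodule.span K {s₀})
    (ψ : ↥Λ →ₗ[K] (Hd →ₗ[K] Sd))
    (hψ : ∀ (φ : ↥Λ) (x : Hd), (φ : Hd →ₗ[K] Sd) x = 0 →
      ψ φ x ∈ Submodule.span K {s₀})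
    (φ₀ : ↥Λ) (x₀ : Hd) (h0 : (φ₀ : Hd →ₗ[K] Sd) x₀ ≠ 0)
    (hx : ψ φ₀ x₀ ∈ Submodule.span K {s₀}) :
    ∀ (φ : ↥Λ) (x : Hd), ψ φ x ∈ Submodule.span K {s₀} := by
  set L := Submodule.span K {s₀} with hLdef
  have hmem : ∀ (φ : ↥Λ) (x : Hd), (φ : Hd →ₗ[K] Sd) x ∈ L := fun φ x =>
    hrange φ.1 φ.2 ⟨x, rfl⟩
  -- φ₀ is full
  have hfull₀ : ∀ y, ψ φ₀ y ∈ L :=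
    prop_lem s₀ φ₀.1 (ψ φ₀) (hmem φ₀) (hψ φ₀) x₀ h0 hx
  intro φ x
  by_cases hφ0 : (φ : Hd →ₗ[K] Sd) = 0
  · have : φ = 0 := Subtype.ext hφ0
    simp [this]
  by_cases hdep : ∃ c : K, φ = c • φ₀
  · obtain ⟨c, rfl⟩ := hdep
    rw [map_smul]
    exact Submodule.smul_mem _ _ (hfull₀ x)
  -- independent case
  have hnk : ¬ (∀ z, (φ₀ : Hd →ₗ[K] Sd) z = 0 → (φ : Hd →ₗ[K] Sd) z = 0) := by
    intro hk
    obtain ⟨c, hc⟩ := lemA s₀ φ₀.1 φ.1 (hmem φ₀) (hmem φ) x₀ h0 hk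
    exact hdep ⟨c, Subtype.ext hc⟩
  push_neg at hnk
  obtain ⟨z₀, hz₀k, hz₀⟩ := hnk
  obtain ⟨a, ha⟩ := Submodule.mem_span_singleton.mp (hmem φ z₀)
  have ha0 : a ≠ 0 := by rintro rfl; simp [← ha] at hz₀
  obtain ⟨c, hc⟩ := Submodule.mem_span_singleton.mp (hmem φ x₀)
  set x₀' : Hd := x₀ - (c * a⁻¹) • z₀ with hx₀'def
  have hφx₀' : (φ : Hd →ₗ[K] Sd) x₀' = 0 := by
    simp [hx₀'def, ← hc, ← ha, smul_smul, mul_assoc, inv_mul_cancel₀ ha0]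
  have hφ₀x₀' : (φ₀ : Hd →ₗ[K] Sd) x₀' = (φ₀ : Hd →ₗ[K] Sd) x₀ := by
    simp [hx₀'def, hz₀k]
  obtain ⟨b, hb⟩ := Submodule.mem_span_singleton.mp (hmem φ₀ x₀')
  have hb0 : b ≠ 0 := by rintro rfl; rw [hφ₀x₀'] at hb; simp [← hb] at h0
  set r : K := -(b * a⁻¹) with hrdef
  have hu : ((φ + φ₀ : ↥Λ) : Hd →ₗ[K] Sd) (x₀' + r • z₀) = 0 := by
    push_cast
    simp only [LinearMap.add_apply, map_add, map_smul, hφx₀', hz₀k, ← hb, ← ha,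
      smul_zero, zero_add, add_zero, smul_smul]
    rw [hrdef]
    have : -(b * a⁻¹) * a = -b := by field_simp
    rw [this, ← add_smul]
    simp
  have hsum := hψ (φ + φ₀) _ hu
  have hexp : ψ (φ + φ₀) (x₀' + r • z₀)
      = ψ φ x₀' + r • ψ φ z₀ + (ψ φ₀ x₀' + r • ψ φ₀ z₀) := by
    simp only [map_add, map_smul, LinearMap.add_apply, LinearMap.smul_apply, smul_add]
    abel
  rw [hexp] at hsum
  have h1 : ψ φ x₀' ∈ L := hψ φ x₀' hφx₀'
  have h2 : ψ φ₀ x₀' + r • ψ φ₀ z₀ ∈ L :=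
    Submodule.add_mem _ (hfull₀ _) (Submodule.smul_mem _ _ (hfull₀ _))
  have h3 : r • ψ φ z₀ ∈ L := by
    have := Submodule.sub_mem _ (Submodule.sub_mem _ hsum h2) h1
    simpa using this
  have hr0 : r ≠ 0 := by
    rw [hrdef]; simp [hb0, ha0]
  have h4 : ψ φ z₀ ∈ L := by
    have := Submodule.smul_mem _ r⁻¹ h3
    rwa [smul_smul, inv_mul_cancel₀ hr0, one_smul] at this
  exact prop_lem s₀ φ.1 (ψ φ) (hmem φ) (hψ φ) z₀ hz₀ h4 x

end helpers

set_option maxHeartbeats 1000000 in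
set_option synthInstance.maxHeartbeats 400000 in
/-- For a point `Λ = ⟨s₀⟩ ⊗ Γ` of the generalized Segre variety inside
`Hom(H*, S*)` (a `(k+1)`-dimensional space of rank-one maps with image `⟨s₀⟩` and common
kernel of dimension `n-k`), the space
`T̃ = {ψ ∈ Hom(Λ, Hom(H*,S*)) : (ψ(φ))(ker φ) ⊆ ⟨s₀⟩ for all φ ∈ Λ}`
has dimension `(k+1)(n+1) + s - 1`, where `dim S = s` and `dim H = n+1`. -/
theorem stmt12 {K Sd Hd : Type*} [Field K] [IsAlgClosed K] [CharZero K]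
    [AddCommGroup Sd] [Module K Sd] [AddCommGroup Hd] [Module K Hd]
    [FiniteDimensional K Sd] [FiniteDimensional K Hd] (k n s : ℕ)
    (hs : finrank K Sd = s) (hn : finrank K Hd = n + 1) (hkn : k ≤ n)
    (s₀ : Sd) (hs₀ : s₀ ≠ 0)
    (Λ : Submodule K (Hd →ₗ[K] Sd)) (hΛ : finrank K Λ = k + 1)
    (hrange : ∀ f ∈ Λ, LinearMap.range f ≤ Submodule.span K {s₀})
    (hker : finrank K ↥(⨅ f : Λ, LinearMap.ker (f : Hd →ₗ[K] Sd)) = n - k)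
    (Tt : Submodule K (↥Λ →ₗ[K] (Hd →ₗ[K] Sd)))
    (hTt : Tt =
      ⨅ (φ : ↥Λ) (x : ↥(LinearMap.ker (φ : Hd →ₗ[K] Sd))),
        Submodule.comap ((LinearMap.applyₗ (x : Hd)).comp (LinearMap.applyₗ φ))
          (Submodule.span K {s₀})) :
    (finrank K ↥Tt : ℤ) = ((k : ℤ) + 1) * ((n : ℤ) + 1) + (s : ℤ) - 1 := by
  classical
  haveI h0 : FiniteDimensional K ↥Tt := inferInstance
  set L := Submodule.span K {s₀} with hLdef
  have hL1 : finrank K ↥L = 1 := finrank_span_singleton hs₀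
  -- membership criterion for Tt
  have memTt : ∀ ψ : ↥Λ →ₗ[K] (Hd →ₗ[K] Sd), ψ ∈ Tt ↔
      ∀ (φ : ↥Λ) (x : Hd), (φ : Hd →ₗ[K] Sd) x = 0 → ψ φ x ∈ L := by
    intro ψ
    rw [hTt]
    simp only [Submodule.mem_iInf, Submodule.mem_comap]
    constructor
    · intro h φ x hx; exact h φ ⟨x, hx⟩
    · intro h φ x; exact h φ x.1 x.2
  -- pick φ₀ ≠ 0 and x₀ with φ₀ x₀ ≠ 0
  haveI : FiniteDimensional K ↥Λ := inferInstance
  have hnt : Nontrivial ↥Λ := by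
    refine (Module.finrank_pos_iff (R := K)).mp ?_
    rw [hΛ]; omega
  obtain ⟨φ₀, hφ₀⟩ := exists_ne (0 : ↥Λ)
  have hφ₀v : (φ₀ : Hd →ₗ[K] Sd) ≠ 0 := fun h => hφ₀ (Subtype.ext h)
  obtain ⟨x₀, hx₀⟩ : ∃ x, (φ₀ : Hd →ₗ[K] Sd) x ≠ 0 := by
    by_contra h
    push_neg at h
    exact hφ₀v (LinearMap.ext h)
  -- the evaluation map Φ : Tt → Sd ⧸ L
  obtain ⟨Φ, hΦapp⟩ : ∃ Φ : ↥Tt →ₗ[K] (Sd ⧸ L), ∀ ψ : ↥Tt,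
      Φ ψ = L.mkQ ((ψ : ↥Λ →ₗ[K] (Hd →ₗ[K] Sd)) φ₀ x₀) :=
    ⟨(L.mkQ.comp ((LinearMap.applyₗ x₀).comp (LinearMap.applyₗ φ₀))).domRestrict Tt,
     fun ψ => rfl⟩
  -- a functional σ with σ s₀ = 1
  obtain ⟨σ, hσ⟩ := LinearMap.exists_leftInverse_of_injective
    (LinearMap.toSpanSingleton K Sd s₀) (LinearMap.ker_toSpanSingleton (R := K) (M := Sd) hs₀)
  have hσ1 : σ s₀ = 1 := by
    have := LinearMap.congr_fun hσ 1
    simpa using this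
  -- Φ is surjective
  have hsurj : Function.Surjective Φ := by
    intro q
    obtain ⟨a, ha⟩ := Submodule.mem_span_singleton.mp
      (hrange φ₀.1 φ₀.2 ⟨x₀, rfl⟩ : (φ₀ : Hd →ₗ[K] Sd) x₀ ∈ L)
    have ha0 : a ≠ 0 := by rintro rfl; simp [← ha] at hx₀
    obtain ⟨v, hv⟩ := L.mkQ_surjective (a⁻¹ • q)
    set ψv : ↥Λ →ₗ[K] (Hd →ₗ[K] Sd) :=
      { toFun := fun φ => (LinearMap.toSpanSingleton K Sd v).comp (σ.comp (φ : Hd →ₗ[K] Sd))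
        map_add' := by intro φ₁ φ₂; ext x; simp [add_smul]
        map_smul' := by intro c φ₁; ext x; simp [mul_smul] } with hψvdef
    have hψvmem : ψv ∈ Tt := by
      rw [memTt]
      intro φ x hx
      simp [hψvdef, hx]
    refine ⟨⟨ψv, hψvmem⟩, ?_⟩
    rw [hΦapp]
    have : ψv φ₀ x₀ = σ ((φ₀ : Hd →ₗ[K] Sd) x₀) • v := by
      simp [hψvdef, LinearMap.toSpanSingleton_apply]
    rw [this, ← ha, map_smul, map_smul, hσ1, smul_eq_mul, mul_one, hv, smul_smul,
      mul_inv_cancel₀ ha0, one_smul]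
  -- kernel of Φ : equals W pulled back
  set W : Submodule K (↥Λ →ₗ[K] (Hd →ₗ[K] Sd)) :=
    ⨅ (φ : ↥Λ) (x : Hd),
      Submodule.comap ((LinearMap.applyₗ x).comp (LinearMap.applyₗ φ)) L with hWdef
  have memW : ∀ ψ : ↥Λ →ₗ[K] (Hd →ₗ[K] Sd), ψ ∈ W ↔
      ∀ (φ : ↥Λ) (x : Hd), ψ φ x ∈ L := by
    intro ψ
    rw [hWdef]
    simp only [Submodule.mem_iInf, Submodule.mem_comap]
    rfl
  have hWle : W ≤ Tt := by
    intro ψ hψ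
    rw [memTt]
    intro φ x _
    exact (memW ψ).mp hψ φ x
  have hkerΦ : (LinearMap.ker Φ).map Tt.subtype = W := by
    ext ψ
    simp only [Submodule.mem_map, LinearMap.mem_ker, Submodule.coe_subtype]
    constructor
    · rintro ⟨ψ', hψ', rfl⟩
      rw [hΦapp, Submodule.mkQ_apply, Submodule.Quotient.mk_eq_zero] at hψ'
      rw [memW]
      exact key_lem s₀ hs₀ Λ hrange ψ'.1 ((memTt ψ'.1).mp ψ'.2) φ₀ x₀ hx₀ hψ'
    · intro h
      refine ⟨⟨ψ, hWle h⟩, ?_, rfl⟩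
      rw [hΦapp, Submodule.mkQ_apply, Submodule.Quotient.mk_eq_zero]
      exact (memW ψ).mp h φ₀ x₀
  -- dimension of W
  set G : (↥Λ →ₗ[K] (Hd →ₗ[K] ↥L)) →ₗ[K] (↥Λ →ₗ[K] (Hd →ₗ[K] Sd)) :=
    LinearMap.llcomp K ↥Λ (Hd →ₗ[K] ↥L) (Hd →ₗ[K] Sd)
      (LinearMap.llcomp K Hd ↥L Sd L.subtype) with hGdef
  have hGapp : ∀ χ (φ : ↥Λ) (x : Hd), G χ φ x = (χ φ x : Sd) := fun χ φ x => rfl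
  have hGinj : Function.Injective G := by
    intro χ₁ χ₂ h
    ext φ x
    have := congrArg (fun g => g φ x) h
    simp only [hGapp] at this
    exact_mod_cast this
  have hGrange : LinearMap.range G = W := by
    ext ψ
    rw [LinearMap.mem_range, memW]
    constructor
    · rintro ⟨χ, rfl⟩ φ x
      rw [hGapp]
      exact (χ φ x).2
    · intro h
      refine ⟨{ toFun := fun φ => LinearMap.codRestrict L (ψ φ) (h φ)
                map_add' := by intro φ₁ φ₂; ext x; simp
                map_smul' := by intro c φ₁; ext x; simp }, ?_⟩
      ext φ x
      rfl
  have hWrank : finrank K ↥W = (k + 1) * ((n + 1) * 1) := by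
    rw [← hGrange, LinearMap.finrank_range_of_inj hGinj]
    rw [Module.finrank_linearMap, Module.finrank_linearMap, hΛ, hn, hL1]
  -- assemble
  have hrn := LinearMap.finrank_range_add_finrank_ker (K := K) (V := ↥Tt) (V₂ := Sd ⧸ L) Φ
  have hrange' : finrank K ↥(LinearMap.range Φ) = finrank K (Sd ⧸ L) := by
    rw [LinearMap.range_eq_top.mpr hsurj, finrank_top]
  have hmapeq := Submodule.finrank_map_subtype_eq Tt (LinearMap.ker Φ)
  rw [hkerΦ] at hmapeq
  rw [hrange', ← hmapeq, hWrank] at hrn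
  have hq : finrank K (Sd ⧸ L) + 1 = s := by
    have := Submodule.finrank_quotient_add_finrank L
    rw [hL1, hs] at this
    exact this
  rw [← hrn]
  push_cast
  have hcast : ((finrank K (Sd ⧸ L) : ℤ)) = (s : ℤ) - 1 := by
    have h' : ((finrank K (Sd ⧸ L) : ℤ)) + 1 = s := by exact_mod_cast hq
    linarith
  rw [hcast]
  ring
end

section
/- With notation as in the tangent space computation: T̃ := { ψ ∈ Hom(Λ, Hom(H*,S*)) : (ψ(φ))(ker φ) ⊆ ⟨s₀⟩ for all φ ∈ Λ } contains K := Hom(Λ, Hom(H*, ⟨s₀⟩)) as a subspace of dimension (k+1)(n+1), and the quotient P := T̃ / K has dimension exactly s - 1. -/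
open Module

lemma aux_finrank_map {K V W : Type*} [Field K] [AddCommGroup V] [Module K V]
    [AddCommGroup W] [Module K W] [FiniteDimensional K V]
    (p q : Submodule K V) (f : V →ₗ[K] W) (hker : LinearMap.ker f = q) (hle : q ≤ p) :
    finrank K ↥(p.map f) + finrank K ↥q = finrank K ↥p := by
  have h := LinearMap.finrank_range_add_finrank_ker (f.domRestrict p)
  rw [LinearMap.ker_domRestrict, hker] at h
  rw [LinearMap.range_domRestrict] at h
  rwa [(Submodule.comapSubtypeEquivOfLe hle).finrank_eq] at h

set_option maxHeartbeats 1000000 in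
/-- With `T̃` as in Statement 12, the subspace
`K' = Hom(Λ, Hom(H*, ⟨s₀⟩))` is contained in `T̃`, has dimension `(k+1)(n+1)`, and the
quotient `P = T̃ / K'` has dimension exactly `s - 1`. -/
theorem stmt13 {K Sd Hd : Type*} [Field K] [IsAlgClosed K] [CharZero K]
    [AddCommGroup Sd] [Module K Sd] [AddCommGroup Hd] [Module K Hd]
    [FiniteDimensional K Sd] [FiniteDimensional K Hd] (k n s : ℕ)
    (hs : finrank K Sd = s) (hs2 : 2 ≤ s) (hn : finrank K Hd = n + 1) (hkn : k ≤ n)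
    (s₀ : Sd) (hs₀ : s₀ ≠ 0)
    (Λ : Submodule K (Hd →ₗ[K] Sd)) (hΛ : finrank K Λ = k + 1)
    (hrange : ∀ f ∈ Λ, LinearMap.range f ≤ Submodule.span K {s₀})
    (hker : finrank K ↥(⨅ f : Λ, LinearMap.ker (f : Hd →ₗ[K] Sd)) = n - k)
    (Tt K' : Submodule K (↥Λ →ₗ[K] (Hd →ₗ[K] Sd)))
    (hTt : Tt =
      ⨅ (φ : ↥Λ) (x : ↥(LinearMap.ker (φ : Hd →ₗ[K] Sd))),
        Submodule.comap ((LinearMap.applyₗ (x : Hd)).comp (LinearMap.applyₗ φ))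
          (Submodule.span K {s₀}))
    (hK' : K' =
      ⨅ (φ : ↥Λ) (x : Hd),
        Submodule.comap ((LinearMap.applyₗ x).comp (LinearMap.applyₗ φ))
          (Submodule.span K {s₀})) :
    K' ≤ Tt ∧ finrank K ↥K' = (k + 1) * (n + 1) ∧
      finrank K ↥(Tt.map K'.mkQ) = s - 1 := by
  classical
  -- membership characterisations
  have hmemTt : ∀ ψ : ↥Λ →ₗ[K] Hd →ₗ[K] Sd, ψ ∈ Tt ↔
      ∀ (φ : ↥Λ) (x : Hd), (φ : Hd →ₗ[K] Sd) x = 0 → ψ φ x ∈ Submodule.span K {s₀} := by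
    intro ψ
    simp [hTt, Submodule.mem_iInf, Submodule.mem_comap, LinearMap.mem_ker, Subtype.forall]
  have hmemK' : ∀ ψ : ↥Λ →ₗ[K] Hd →ₗ[K] Sd, ψ ∈ K' ↔
      ∀ (φ : ↥Λ) (x : Hd), ψ φ x ∈ Submodule.span K {s₀} := by
    intro ψ
    simp [hK', Submodule.mem_iInf, Submodule.mem_comap]
  have hKT : K' ≤ Tt := by
    intro ψ hψ
    rw [hmemTt]
    intro φ x _
    exact (hmemK' ψ).1 hψ φ x
  -- a dual functional with t s₀ = 1
  obtain ⟨t', ht'⟩ : ∃ t : Module.Dual K Sd, t s₀ ≠ 0 := by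
    by_contra hcon
    push_neg at hcon
    exact hs₀ ((Module.forall_dual_apply_eq_zero_iff K s₀).mp hcon)
  set t : Sd →ₗ[K] K := (t' s₀)⁻¹ • t' with htdef
  have ht : t s₀ = 1 := by
    simp only [htdef, LinearMap.smul_apply, smul_eq_mul]
    exact inv_mul_cancel₀ ht'
  -- the coefficient functionals γ
  set γ : ↥Λ →ₗ[K] (Hd →ₗ[K] K) := (LinearMap.llcomp K Hd Sd K t).comp Λ.subtype with hγdef
  have hγ : ∀ (φ : ↥Λ) (h : Hd), (φ : Hd →ₗ[K] Sd) h = γ φ h • s₀ := by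
    intro φ h
    obtain ⟨c, hc⟩ := Submodule.mem_span_singleton.mp
      (hrange φ φ.2 (LinearMap.mem_range.mpr ⟨h, rfl⟩))
    have : γ φ h = c := by
      show t ((φ : Hd →ₗ[K] Sd) h) = c
      rw [← hc, map_smul, ht, smul_eq_mul, mul_one]
    rw [this, ← hc]
  -- quotient and the post-composition map Φ
  set π : Sd →ₗ[K] (Sd ⧸ Submodule.span K {s₀}) := (Submodule.span K {s₀}).mkQ with hπdef
  have hπ0 : ∀ x : Sd, π x = 0 ↔ x ∈ Submodule.span K {s₀} := by
    intro x
    rw [hπdef, Submodule.mkQ_apply, Submodule.Quotient.mk_eq_zero]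
  set Φ : (↥Λ →ₗ[K] Hd →ₗ[K] Sd) →ₗ[K] (↥Λ →ₗ[K] Hd →ₗ[K] (Sd ⧸ Submodule.span K {s₀})) :=
    LinearMap.llcomp K (↥Λ) (Hd →ₗ[K] Sd) (Hd →ₗ[K] (Sd ⧸ Submodule.span K {s₀}))
      (LinearMap.llcomp K Hd Sd (Sd ⧸ Submodule.span K {s₀}) π)
    with hΦdef
  have hΦapp : ∀ (ψ : ↥Λ →ₗ[K] Hd →ₗ[K] Sd) (φ : ↥Λ) (h : Hd),
      Φ ψ φ h = π (ψ φ h) := fun _ _ _ => rfl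
  have hkerΦ : LinearMap.ker Φ = K' := by
    ext ψ
    rw [LinearMap.mem_ker, hmemK']
    constructor
    · intro h0 φ x
      have : Φ ψ φ x = 0 := by rw [h0]; rfl
      rw [hΦapp, hπ0] at this
      exact this
    · intro hmem
      ext φ x
      show Φ ψ φ x = 0
      rw [hΦapp, hπ0]
      exact hmem φ x
  -- ι
  set ι : (Sd ⧸ Submodule.span K {s₀}) →ₗ[K] (↥Λ →ₗ[K] Hd →ₗ[K] (Sd ⧸ Submodule.span K {s₀})) :=
    (LinearMap.smulRightₗ.comp γ).flip with hιdef
  have hιapp : ∀ (v : Sd ⧸ Submodule.span K {s₀}) (φ : ↥Λ) (h : Hd),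
      ι v φ h = γ φ h • v := fun _ _ _ => rfl
  -- Lemma A
  have lemA : ∀ ψ ∈ Tt, ∀ (φ : ↥Λ) (h h' : Hd),
      γ φ h' • Φ ψ φ h = γ φ h • Φ ψ φ h' := by
    intro ψ hψ φ h h'
    have hu : (φ : Hd →ₗ[K] Sd) (γ φ h' • h - γ φ h • h') = 0 := by
      rw [map_sub, map_smul, map_smul, hγ φ h, hγ φ h', smul_smul, smul_smul, mul_comm,
        sub_self]
    have hm := (hmemTt ψ).1 hψ φ _ hu
    have h0 : π (ψ φ (γ φ h' • h - γ φ h • h')) = 0 := (hπ0 _).2 hm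
    rw [map_sub, map_smul, map_smul, map_sub, map_smul, map_smul, sub_eq_zero] at h0
    simpa [hΦapp] using h0
  -- base point
  obtain ⟨φ₀, hφ₀⟩ : ∃ φ₀ : ↥Λ, φ₀ ≠ 0 := by
    have hpos : 0 < finrank K ↥Λ := by rw [hΛ]; omega
    have := finrank_pos_iff.mp hpos
    exact exists_ne 0
  obtain ⟨h₁, hh₁⟩ : ∃ h, (φ₀ : Hd →ₗ[K] Sd) h ≠ 0 := by
    by_contra hcon
    push_neg at hcon
    apply hφ₀
    ext h
    exact hcon h
  have hγ₁ : γ φ₀ h₁ ≠ 0 := by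
    intro h0
    exact hh₁ (by rw [hγ, h0, zero_smul])
  set h₀ : Hd := (γ φ₀ h₁)⁻¹ • h₁ with hh₀def
  have hγh₀ : γ φ₀ h₀ = 1 := by
    rw [hh₀def, map_smul, smul_eq_mul]
    exact inv_mul_cancel₀ hγ₁
  -- the key identification
  have hmap : Tt.map Φ = LinearMap.range ι := by
    apply le_antisymm
    · rintro _ ⟨ψ, hψ, rfl⟩
      set v : Sd ⧸ Submodule.span K {s₀} := Φ ψ φ₀ h₀ with hvdef
      refine ⟨v, ?_⟩
      have hbase : ∀ h : Hd, Φ ψ φ₀ h = γ φ₀ h • v := by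
        intro h
        have := lemA ψ hψ φ₀ h h₀
        rwa [hγh₀, one_smul] at this
      have key : ∀ (φ : ↥Λ) (h : Hd), Φ ψ φ h = γ φ h • v := by
        intro φ h
        by_cases hcdep : ∀ x : Hd, γ φ x = γ φ h₀ * γ φ₀ x
        · -- φ is a multiple of φ₀
          obtain ⟨c, hcx, hφeq⟩ : ∃ c : K, (∀ x, γ φ x = c * γ φ₀ x) ∧ φ = c • φ₀ := by
            refine ⟨γ φ h₀, hcdep, ?_⟩
            apply Subtype.ext
            show (φ : Hd →ₗ[K] Sd) = γ φ h₀ • (φ₀ : Hd →ₗ[K] Sd)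
            ext x
            rw [LinearMap.smul_apply, hγ φ x, hγ φ₀ x, hcdep x, mul_smul]
          rw [hφeq, map_smul, LinearMap.smul_apply, hbase h, map_smul,
            LinearMap.smul_apply, smul_smul, smul_eq_mul]
        · push_neg at hcdep
          obtain ⟨h₂, hh₂⟩ := hcdep
          set d : Sd ⧸ Submodule.span K {s₀} := Φ ψ φ h₀ - γ φ h₀ • v with hddef
          have hE : ∀ x : Hd, Φ ψ φ x = γ φ x • v + γ φ₀ x • d := by
            intro x
            have e1 := lemA ψ hψ (φ + φ₀) x h₀
            simp only [map_add, LinearMap.add_apply] at e1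
            rw [hγh₀] at e1
            have e2 := lemA ψ hψ φ x h₀
            have e3 := hbase x
            have e4 := hbase h₀
            rw [hγh₀, one_smul] at e4
            rw [hddef]
            linear_combination (norm := module) e1 - e2 - (γ φ h₀ + 1) • e3
              + (γ φ x + γ φ₀ x) • e4
          have hd0 : d = 0 := by
            have e5 := lemA ψ hψ φ h₂ h₀
            rw [hE h₂, hE h₀, hγh₀] at e5
            have hz : (γ φ h₀ * γ φ₀ h₂ - γ φ h₂) • d = 0 := by
              linear_combination (norm := module) e5
            rcases smul_eq_zero.mp hz with hcoef | hd
            · exact absurd (sub_eq_zero.mp hcoef).symm hh₂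
            · exact hd
          rw [hE h, hd0, smul_zero, add_zero]
      ext φ h
      rw [hιapp]
      exact (key φ h).symm
    · rintro _ ⟨v, rfl⟩
      obtain ⟨w, hw⟩ := Submodule.mkQ_surjective (Submodule.span K {s₀}) v
      set ψ : ↥Λ →ₗ[K] Hd →ₗ[K] Sd := (LinearMap.smulRightₗ.flip w).comp γ with hψdef
      have hψapp : ∀ (φ : ↥Λ) (h : Hd), ψ φ h = γ φ h • w := fun _ _ => rfl
      have hψTt : ψ ∈ Tt := by
        rw [hmemTt]
        intro φ x hx
        rw [hψapp]
        have hγ0 : γ φ x = 0 := by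
          have hxx := hγ φ x
          rw [hx] at hxx
          rcases smul_eq_zero.mp hxx.symm with h0 | h0
          · exact h0
          · exact absurd h0 hs₀
        rw [hγ0, zero_smul]
        exact Submodule.zero_mem _
      refine ⟨ψ, hψTt, ?_⟩
      ext φ h
      rw [hΦapp, hψapp, hιapp, map_smul, hπdef, hw]
  -- dimension of the quotient
  have hSb : finrank K (Sd ⧸ Submodule.span K {s₀}) = s - 1 := by
    have h1 := Submodule.finrank_quotient_add_finrank (Submodule.span K {s₀})
    rw [finrank_span_singleton hs₀, hs] at h1
    omega
  -- ι is injective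
  have hιinj : Function.Injective ι := by
    refine (LinearMap.ker_eq_bot (M := Sd ⧸ Submodule.span K {s₀})
      (M₂ := ↥Λ →ₗ[K] Hd →ₗ[K] (Sd ⧸ Submodule.span K {s₀})) (f := ι)).mp ?_
    ext v
    simp only [LinearMap.mem_ker, Submodule.mem_bot]
    constructor
    · intro h0
      have : ι v φ₀ h₀ = 0 := by rw [h0]; rfl
      rwa [hιapp, hγh₀, one_smul] at this
    · intro h0; rw [h0, map_zero]
  have hrι : finrank K ↥(LinearMap.range ι) = s - 1 := by
    rw [LinearMap.finrank_range_of_inj hιinj, hSb]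
  -- Φ is surjective
  have hΦsurj : LinearMap.range Φ = ⊤ := by
    obtain ⟨σ, hσ⟩ := π.exists_rightInverse_of_surjective
      (by rw [hπdef]; exact Submodule.range_mkQ _)
    rw [LinearMap.range_eq_top]
    intro χ
    refine ⟨(LinearMap.llcomp K (↥Λ) (Hd →ₗ[K] (Sd ⧸ Submodule.span K {s₀})) (Hd →ₗ[K] Sd)
      (LinearMap.llcomp K Hd (Sd ⧸ Submodule.span K {s₀}) Sd σ)) χ, ?_⟩
    ext φ x
    show π (σ (χ φ x)) = χ φ x
    have := LinearMap.congr_fun hσ (χ φ x)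
    simpa using this
  -- finrank of K'
  have hrn := LinearMap.finrank_range_add_finrank_ker (V := ↥Λ →ₗ[K] Hd →ₗ[K] Sd)
    (V₂ := ↥Λ →ₗ[K] Hd →ₗ[K] (Sd ⧸ Submodule.span K {s₀})) Φ
  rw [hΦsurj, finrank_top, hkerΦ, Module.finrank_linearMap, Module.finrank_linearMap,
    Module.finrank_linearMap, Module.finrank_linearMap, hΛ, hn, hs, hSb] at hrn
  obtain ⟨m, hm⟩ : ∃ m, s = m + 2 := ⟨s - 2, by omega⟩
  rw [hm, show m + 2 - 1 = m + 1 from by omega] at hrn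
  have hK'rank : finrank K ↥K' = (k + 1) * (n + 1) := by
    rw [show (k+1)*((n+1)*(m+2)) = (k+1)*((n+1)*(m+1)) + (k+1)*(n+1) from by ring] at hrn
    exact Nat.add_left_cancel hrn
  -- assemble
  have h1 := aux_finrank_map Tt K' K'.mkQ (Submodule.ker_mkQ K') hKT
  have h2 := aux_finrank_map (W := ↥Λ →ₗ[K] Hd →ₗ[K] (Sd ⧸ Submodule.span K {s₀})) Tt K' Φ
    hkerΦ hKT
  rw [hmap, hrι] at h2
  refine ⟨hKT, hK'rank, ?_⟩
  omega
end

section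
/- Let ψ ∈ Hom(Λ, Hom(H*, S*)/Λ) satisfy: for all φ ∈ Λ, (ψ(φ))(ker φ) ⊆ ⟨s₀⟩ (this condition is well-defined modulo Λ since Λ consists of maps with image in ⟨s₀⟩), and suppose ψ is not identically valued in Hom(H*, ⟨s₀⟩)/Λ. Then there exists a unique 2-dimensional subspace A ⊆ S* with ⟨s₀⟩ ⊆ A such that for every φ ∈ Λ and every lift ψ̃(φ) ∈ Hom(H*, S*) of ψ(φ), Im ψ̃(φ) ⊆ A; i.e., the image of ψ(φ) modulo ⟨s₀⟩ lies in the single line A/⟨s₀⟩ of S*/⟨s₀⟩, independent of φ. -/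
open Module

/-- A tangent vector `ψ ∈ Hom(Λ, Hom(H*,S*)/Λ)` satisfying
`(ψ(φ))(ker φ) ⊆ ⟨s₀⟩` for all `φ ∈ Λ` and not valued in `Hom(H*,⟨s₀⟩)/Λ` determines a
unique plane `A ⊆ S*` containing `⟨s₀⟩` such that (every lift of) every `ψ(φ)` has image
in `A`. -/
theorem stmt14 {K Sd Hd : Type*} [Field K] [IsAlgClosed K] [CharZero K]
    [AddCommGroup Sd] [Module K Sd] [AddCommGroup Hd] [Module K Hd]
    [FiniteDimensional K Sd] [FiniteDimensional K Hd] (k n s : ℕ)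
    (hs : finrank K Sd = s) (hs3 : 3 ≤ s) (hn : finrank K Hd = n + 1) (hkn : k ≤ n)
    (s₀ : Sd) (hs₀ : s₀ ≠ 0)
    (Λ : Submodule K (Hd →ₗ[K] Sd)) (hΛ : finrank K Λ = k + 1)
    (hrange : ∀ f ∈ Λ, LinearMap.range f ≤ Submodule.span K {s₀})
    (hker : finrank K ↥(⨅ f : Λ, LinearMap.ker (f : Hd →ₗ[K] Sd)) = n - k)
    (ψ : ↥Λ →ₗ[K] ((Hd →ₗ[K] Sd) ⧸ Λ))
    (hψ : ∀ φ : ↥Λ, ∀ g : Hd →ₗ[K] Sd, Λ.mkQ g = ψ φ →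
      ∀ x ∈ LinearMap.ker (φ : Hd →ₗ[K] Sd), g x ∈ Submodule.span K {s₀})
    (hnd : ∃ φ : ↥Λ, ∀ g : Hd →ₗ[K] Sd, Λ.mkQ g = ψ φ →
      ¬ LinearMap.range g ≤ Submodule.span K {s₀}) :
    ∃! A : Submodule K Sd, finrank K A = 2 ∧ Submodule.span K {s₀} ≤ A ∧
      ∀ φ : ↥Λ, ∀ g : Hd →ₗ[K] Sd, Λ.mkQ g = ψ φ → LinearMap.range g ≤ A := by
  classical
  -- a functional σ with σ s₀ = 1
  obtain ⟨σ, hσ⟩ := LinearMap.exists_leftInverse_of_injective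
    (LinearMap.toSpanSingleton K Sd s₀)
    (LinearMap.ker_toSpanSingleton (R := K) (M := Sd) hs₀)
  have hσs₀ : σ s₀ = 1 := by
    have h := LinearMap.congr_fun hσ 1
    simpa using h
  set π := (Submodule.span K {s₀}).mkQ with hπdef
  set T : (Hd →ₗ[K] Sd) →ₗ[K] (Hd →ₗ[K] Sd ⧸ Submodule.span K {s₀}) :=
    LinearMap.llcomp K Hd Sd _ π with hTdef
  have hTΛ : Λ ≤ LinearMap.ker T := by
    intro f hf
    rw [LinearMap.mem_ker]
    ext x
    simp only [hTdef, LinearMap.llcomp_apply, LinearMap.zero_apply, hπdef,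
      Submodule.mkQ_apply, Submodule.Quotient.mk_eq_zero]
    exact hrange f hf ⟨x, rfl⟩
  set G : ↥Λ →ₗ[K] (Hd →ₗ[K] Sd ⧸ Submodule.span K {s₀}) :=
    (Λ.liftQ T hTΛ).comp ψ with hGdef
  have hGlift : ∀ (φ : ↥Λ) (g : Hd →ₗ[K] Sd), Λ.mkQ g = ψ φ → ∀ x, G φ x = π (g x) := by
    intro φ g hg x
    rw [hGdef]
    simp only [LinearMap.comp_apply, ← hg, Submodule.mkQ_apply, Submodule.liftQ_apply,
      hTdef, LinearMap.llcomp_apply]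
  have factA : ∀ (φ : ↥Λ) (x : Hd), (φ : Hd →ₗ[K] Sd) x = σ ((φ : Hd →ₗ[K] Sd) x) • s₀ := by
    intro φ x
    obtain ⟨c, hc⟩ := Submodule.mem_span_singleton.mp (hrange φ φ.2 ⟨x, rfl⟩)
    rw [← hc, map_smul, smul_eq_mul, hσs₀, mul_one]
  have factB : ∀ (φ : ↥Λ) (x : Hd), (φ : Hd →ₗ[K] Sd) x = 0 → G φ x = 0 := by
    intro φ x hx
    obtain ⟨g, hg⟩ := Submodule.mkQ_surjective Λ (ψ φ)
    rw [hGlift φ g hg x, hπdef, Submodule.mkQ_apply, Submodule.Quotient.mk_eq_zero]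
    exact hψ φ g hg x (LinearMap.mem_ker.mpr hx)
  have factC : ∀ (φ : ↥Λ) (x z : Hd), σ ((φ : Hd →ₗ[K] Sd) x) ≠ 0 →
      G φ z = (σ ((φ : Hd →ₗ[K] Sd) z) / σ ((φ : Hd →ₗ[K] Sd) x)) • G φ x := by
    intro φ x z hx
    set c := σ ((φ : Hd →ₗ[K] Sd) z) / σ ((φ : Hd →ₗ[K] Sd) x) with hc
    have h1 : σ ((φ : Hd →ₗ[K] Sd) (z - c • x)) = 0 := by
      rw [map_sub, map_smul, map_sub, map_smul, smul_eq_mul, hc,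
        div_mul_cancel₀ _ hx, sub_self]
    have hker0 : (φ : Hd →ₗ[K] Sd) (z - c • x) = 0 := by
      rw [factA φ (z - c • x), h1, zero_smul]
    have h2 := factB φ (z - c • x) hker0
    rw [map_sub, map_smul] at h2
    have := sub_eq_zero.mp h2
    linear_combination (norm := module) this
  -- pick the distinguished φ₀
  obtain ⟨φ₀, hφ₀⟩ := hnd
  obtain ⟨g₀, hg₀⟩ := Submodule.mkQ_surjective Λ (ψ φ₀)
  obtain ⟨y, hy, hy'⟩ := SetLike.not_le_iff_exists.mp (hφ₀ g₀ hg₀)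
  obtain ⟨x₀, rfl⟩ := hy
  set w₀ : Sd := g₀ x₀ with hw₀
  set v₀ := G φ₀ x₀ with hv₀
  have hπw₀ : π w₀ = v₀ := (hGlift φ₀ g₀ hg₀ x₀).symm
  have hv₀ne : v₀ ≠ 0 := by
    rw [← hπw₀, hπdef, Submodule.mkQ_apply, Ne, Submodule.Quotient.mk_eq_zero]
    exact hy'
  have ha₀ : σ ((φ₀ : Hd →ₗ[K] Sd) x₀) ≠ 0 := by
    intro h
    apply hv₀ne
    rw [hv₀]
    apply factB
    rw [factA φ₀ x₀, h, zero_smul]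
  -- key lemma D
  have factD : ∀ (φ : ↥Λ) (x : Hd), σ ((φ₀ : Hd →ₗ[K] Sd) x) ≠ 0 →
      G φ x ∈ Submodule.span K {v₀} := by
    intro φ x hx
    set a := σ ((φ₀ : Hd →ₗ[K] Sd) x) with hadef
    set b := σ ((φ : Hd →ₗ[K] Sd) x) with hbdef
    set η : ↥Λ := a • φ - b • φ₀ with hη
    have hηx : (η : Hd →ₗ[K] Sd) x = 0 := by
      have hval : (η : Hd →ₗ[K] Sd) x
          = a • ((φ : Hd →ₗ[K] Sd) x) - b • ((φ₀ : Hd →ₗ[K] Sd) x) := by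
        rw [hη]
        simp
      rw [hval, factA φ x, factA φ₀ x, ← hadef, ← hbdef, smul_smul, smul_smul,
        mul_comm a b, sub_self]
    have hGη := factB η x hηx
    have hGηval : G η x = a • G φ x - b • G φ₀ x := by
      rw [hη, map_sub, map_smul, map_smul]
      simp
    rw [hGηval] at hGη
    have hφ₀x : G φ₀ x ∈ Submodule.span K {v₀} := by
      rw [factC φ₀ x₀ x ha₀, hv₀]
      exact Submodule.smul_mem _ _ (Submodule.mem_span_singleton_self _)
    have : G φ x = a⁻¹ • (b • G φ₀ x) := by
      have h' := sub_eq_zero.mp hGη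
      rw [← h', smul_smul, inv_mul_cancel₀ hx, one_smul]
    rw [this]
    exact Submodule.smul_mem _ _ (Submodule.smul_mem _ _ hφ₀x)
  have main : ∀ (φ : ↥Λ) (x : Hd), G φ x ∈ Submodule.span K {v₀} := by
    intro φ x
    by_cases h : σ ((φ₀ : Hd →ₗ[K] Sd) x) = 0
    · have hz : σ ((φ₀ : Hd →ₗ[K] Sd) (x + x₀)) ≠ 0 := by
        rw [map_add, map_add, h, zero_add]
        exact ha₀
      have h1 := factD φ (x + x₀) hz
      have h2 := factD φ x₀ ha₀
      have h3 : G φ x = G φ (x + x₀) - G φ x₀ := by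
        rw [map_add]; abel
      rw [h3]
      exact Submodule.sub_mem _ h1 h2
    · exact factD φ x h
  -- the plane A
  set A : Submodule K Sd := Submodule.comap π (Submodule.span K {v₀}) with hAdef
  have hmemA : ∀ y : Sd, y ∈ A ↔ π y ∈ Submodule.span K {v₀} := fun y => Iff.rfl
  have hπs₀ : π s₀ = 0 := by
    rw [hπdef, Submodule.mkQ_apply, Submodule.Quotient.mk_eq_zero]
    exact Submodule.mem_span_singleton_self _
  have hs₀A : Submodule.span K {s₀} ≤ A := by
    rw [Submodule.span_le]
    intro y hy
    rw [Set.mem_singleton_iff] at hy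
    rw [SetLike.mem_coe, hmemA, hy, hπs₀]
    exact Submodule.zero_mem _
  have hAspan : A = Submodule.span K (Set.range ![s₀, w₀]) := by
    have hr : Set.range ![s₀, w₀] = {s₀, w₀} := by
      ext y
      simp only [Set.mem_range, Fin.exists_fin_two, Matrix.cons_val_zero, Matrix.cons_val_one,
        Matrix.head_cons, Set.mem_insert_iff, Set.mem_singleton_iff, eq_comm]
    rw [hr]
    apply le_antisymm
    · intro y hy
      rw [hmemA] at hy
      obtain ⟨c, hc⟩ := Submodule.mem_span_singleton.mp hy
      have : π (y - c • w₀) = 0 := by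
        rw [map_sub, map_smul, hπw₀, hc, sub_self]
      rw [hπdef, Submodule.mkQ_apply, Submodule.Quotient.mk_eq_zero] at this
      obtain ⟨d, hd⟩ := Submodule.mem_span_singleton.mp this
      have hy' : y = d • s₀ + c • w₀ := by
        rw [hd]; abel
      rw [hy']
      exact Submodule.add_mem _
        (Submodule.smul_mem _ _ (Submodule.subset_span (by simp)))
        (Submodule.smul_mem _ _ (Submodule.subset_span (by simp)))
    · rw [Submodule.span_le]
      intro y hy
      rcases hy with hy | hy
      · exact hs₀A (by rw [hy]; exact Submodule.mem_span_singleton_self _)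
      · rw [Set.mem_singleton_iff] at hy
        subst hy
        rw [SetLike.mem_coe, hmemA, hπw₀]
        exact Submodule.mem_span_singleton_self _
  have hli : LinearIndependent K ![s₀, w₀] := by
    rw [LinearIndependent.pair_iff]
    intro a b hab
    have hb : b = 0 := by
      by_contra hb
      apply hv₀ne
      have : π (a • s₀ + b • w₀) = 0 := by rw [hab, map_zero]
      rw [map_add, map_smul, map_smul] at this
      rw [hπs₀, smul_zero, zero_add, hπw₀] at this
      have := smul_eq_zero.mp this
      tauto
    subst hb
    rw [zero_smul, add_zero, smul_eq_zero] at hab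
    exact ⟨hab.resolve_right hs₀, rfl⟩
  have hfr : finrank K A = 2 := by
    rw [hAspan, finrank_span_eq_card hli]
    simp
  have hranges : ∀ φ : ↥Λ, ∀ g : Hd →ₗ[K] Sd, Λ.mkQ g = ψ φ → LinearMap.range g ≤ A := by
    intro φ g hg y hy
    obtain ⟨x, rfl⟩ := hy
    rw [hmemA, ← hGlift φ g hg x]
    exact main φ x
  refine ⟨A, ⟨hfr, hs₀A, hranges⟩, ?_⟩
  rintro A' ⟨hfr', hs₀A', hranges'⟩
  have hle : A ≤ A' := by
    rw [hAspan, Submodule.span_le, Set.range_subset_iff]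
    intro i
    fin_cases i
    · exact hs₀A' (Submodule.mem_span_singleton_self _)
    · exact hranges' φ₀ g₀ hg₀ ⟨x₀, rfl⟩
  exact (Submodule.eq_of_le_of_finrank_eq hle (hfr.trans hfr'.symm)).symm
end

section
/- Let X be a projective variety over K of dimension ≥ k+1, L a globally generated line bundle on X, and M a globally generated vector bundle of rank k+1 on X with h⁰(M) = k+2 and c_{k+1}(M) ≠ 0. Then for every (k+1)-dimensional subspace Δ ⊆ H⁰(M), the evaluation morphism of sheaves Δ ⊗ O_X → M is injective. -/
open Module

/-- Let `M` be a globally generated rank-`(k+1)` bundle on a projective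
variety `X` of dimension `≥ k+1` with `h⁰(M) = k+2` and `c_{k+1}(M) ≠ 0`.  Then for every
`(k+1)`-dimensional `Δ ⊆ H⁰(M)` the evaluation `Δ ⊗ O_X → M` is injective as a sheaf map.
Pointwise model: `V = H⁰(M)` of dimension `k+2`, fibres modelled by surjections
`ev x : V → F` onto a `(k+1)`-dimensional space (global generation); `c_{k+1}(M) ≠ 0` is
encoded by "every nonzero section vanishes at some point"; injectivity of the sheaf map
means `ev x` is injective on `Δ` at some point `x`. -/
theorem stmt19 {K V F : Type*} [Field K] [IsAlgClosed K] [CharZero K]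
    [AddCommGroup V] [Module K V] [AddCommGroup F] [Module K F]
    [FiniteDimensional K V] [FiniteDimensional K F]
    (k : ℕ) (X : Type*) [Nonempty X]
    (hV : finrank K V = k + 2) (hF : finrank K F = k + 1)
    (ev : X → (V →ₗ[K] F))
    (hgen : ∀ x, Function.Surjective (ev x))
    (hc : ∀ σ : V, σ ≠ 0 → ∃ x, ev x σ = 0) :
    ∀ Δ : Submodule K V, finrank K Δ = k + 1 →
      ∃ x, Disjoint Δ (LinearMap.ker (ev x)) := by
  intro Δ hΔ
  by_contra hcon
  push_neg at hcon
  -- Δ ≠ ⊤, so pick σ ∉ Δ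
  have hΔne : Δ ≠ ⊤ := by
    intro h
    rw [h, finrank_top] at hΔ
    omega
  obtain ⟨σ, hσΔ⟩ : ∃ σ : V, σ ∉ Δ := by
    by_contra h
    push_neg at h
    exact hΔne (Submodule.eq_top_iff'.mpr h)
  have hσ0 : σ ≠ 0 := fun h => hσΔ (h ▸ Δ.zero_mem)
  obtain ⟨x, hx⟩ := hc σ hσ0
  -- ker (ev x) has dimension 1
  have hker : finrank K (LinearMap.ker (ev x)) = 1 := by
    have h1 := LinearMap.finrank_range_add_finrank_ker (ev x)
    rw [LinearMap.range_eq_top.mpr (hgen x), finrank_top, hF, hV] at h1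
    omega
  obtain ⟨⟨v₀, hv₀ker⟩, hv₀ne, hspan⟩ := (finrank_eq_one_iff' (K := K)).mp hker
  -- nonzero element of Δ ⊓ ker
  have hnd := hcon x
  rw [Submodule.disjoint_def] at hnd
  push_neg at hnd
  obtain ⟨v, hvΔ, hvker, hvne⟩ := hnd
  obtain ⟨c, hcv⟩ := hspan ⟨v, hvker⟩
  obtain ⟨d, hdσ⟩ := hspan ⟨σ, hx⟩
  have hcv' : c • v₀ = v := congrArg Subtype.val hcv
  have hdσ' : d • v₀ = σ := congrArg Subtype.val hdσ
  have hc0 : c ≠ 0 := by rintro rfl; simp at hcv'; exact hvne hcv'.symm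
  have hv₀Δ : v₀ ∈ Δ := by
    have : c⁻¹ • v ∈ Δ := Δ.smul_mem _ hvΔ
    rwa [← hcv', smul_smul, inv_mul_cancel₀ hc0, one_smul] at this
  exact hσΔ (hdσ' ▸ Δ.smul_mem d hv₀Δ)
end
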